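/- For the model fhat(x_1, x_2) = b_1 x_1 + b_2 x_2 + b_12 x_1 x_2 with E[X_1] = E[X_2] = 0 and finite fourth moments, the variance of the difference f^{PD,c}_{{1,2}}(X_1, X_2) - f^{PD,c}_{{1}}(X_1) - f^{PD,c}_{{2}}(X_2), where each f^{PD,c} is the mean-centered partial dependence function evaluated at the random features, equals b_12^2 Var(X_1 X_2) = b_12^2 (Var(X_1)Var(X_2) - Cov(X_1,X_2)^2 + Cov(X_1^2, X_2^2)). -/

import Mathlib

/-!
Both features are centred, so integrating the bilinear model over one feature kills the
linear term in it together with the interaction, and the partial dependence functions of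
the single features are `b₁ x₁` and `b₂ x₂`, with mean zero. The difference of the centred
PD functions therefore collapses to `b₁₂ (X₁X₂ - E[X₁X₂])`, whose variance is
`b₁₂² Var(X₁X₂)`. Expanding `Var(X₁X₂) = E[X₁²X₂²] - E[X₁X₂]²` against the moments of the
centred features gives the covariance form.
-/

open MeasureTheory ProbabilityTheory

/-- Covariance of two real random variables. -/
noncomputable def cov {Ω : Type*} [MeasurableSpace Ω] (μ : Measure Ω)
    (f g : Ω → ℝ) : ℝ :=
  (∫ ω, f ω * g ω ∂μ) - (∫ ω, f ω ∂μ) * (∫ ω, g ω ∂μ)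

instance ENNReal.holderTriple_four_four_two : ENNReal.HolderTriple 4 4 2 :=
  ⟨by rw [← two_mul, show (4 : ENNReal) = 2 * 2 by norm_num, ENNReal.mul_inv (by simp) (by simp),
    ← mul_assoc, ENNReal.mul_inv_cancel (by simp) (by simp), one_mul]⟩

section

variable {Ω : Type*} [MeasurableSpace Ω] {μ : Measure Ω} {X Y : Ω → ℝ}

lemma integral_const_add_mul_of_integral_eq_zero [IsProbabilityMeasure μ]
    (hX : Integrable X μ) (hX0 : ∫ ω, X ω ∂μ = 0) (a c : ℝ) :
    ∫ ω, a + c * X ω ∂μ = a := by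
  rw [integral_add (integrable_const a) (hX.const_mul c), integral_const, integral_const_mul, hX0]
  simp

lemma integral_bilinear_of_integral_eq_zero (hX : Integrable X μ) (hY : Integrable Y μ)
    (hXY : Integrable (fun ω => X ω * Y ω) μ) (hX0 : ∫ ω, X ω ∂μ = 0) (hY0 : ∫ ω, Y ω ∂μ = 0)
    (a b c : ℝ) :
    ∫ ω, a * X ω + b * Y ω + c * X ω * Y ω ∂μ = c * ∫ ω, X ω * Y ω ∂μ := by
  simp_rw [mul_assoc c]
  rw [integral_add (f := fun ω => a * X ω + b * Y ω) ((hX.const_mul a).add (hY.const_mul b))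
      (hXY.const_mul c),
    integral_add (hX.const_mul a) (hY.const_mul b), integral_const_mul, integral_const_mul,
    integral_const_mul, hX0, hY0]
  ring

lemma variance_mul_eq_of_integral_eq_zero [IsProbabilityMeasure μ]
    (hX : MemLp X 2 μ) (hY : MemLp Y 2 μ) (hXY : MemLp (fun ω => X ω * Y ω) 2 μ)
    (hX0 : ∫ ω, X ω ∂μ = 0) (hY0 : ∫ ω, Y ω ∂μ = 0) :
    variance (fun ω => X ω * Y ω) μ
      = variance X μ * variance Y μ - cov μ X Y ^ 2
        + cov μ (fun ω => X ω ^ 2) (fun ω => Y ω ^ 2) := by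
  rw [variance_eq_sub hXY, variance_eq_sub hX, variance_eq_sub hY]
  simp only [cov, Pi.pow_apply, mul_pow, hX0, hY0]
  ring

end

/-- For `f̂(x₁,x₂) = b₁x₁ + b₂x₂ + b₁₂x₁x₂` with zero-mean features,
the variance of `f^{PD,c}_{12}(X₁,X₂) - f^{PD,c}_{1}(X₁) - f^{PD,c}_{2}(X₂)`
equals `b₁₂² Var(X₁X₂) = b₁₂²(Var(X₁)Var(X₂) - Cov(X₁,X₂)² + Cov(X₁²,X₂²))`. -/
theorem stmt_9 {Ω : Type*} [MeasurableSpace Ω] (μ : Measure Ω)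
    [IsProbabilityMeasure μ]
    (X1 X2 : Ω → ℝ) (hm1 : MemLp X1 4 μ) (hm2 : MemLp X2 4 μ)
    (h1 : ∫ ω, X1 ω ∂μ = 0) (h2 : ∫ ω, X2 ω ∂μ = 0)
    (b1 b2 b12 : ℝ) (fhat : ℝ → ℝ → ℝ)
    (hfhat : ∀ x1 x2, fhat x1 x2 = b1 * x1 + b2 * x2 + b12 * x1 * x2)
    -- the partial dependence functions
    (fPD12 : ℝ → ℝ → ℝ) (hPD12 : ∀ x1 x2, fPD12 x1 x2 = fhat x1 x2)
    (fPD1 : ℝ → ℝ) (hPD1 : ∀ x1, fPD1 x1 = ∫ ω, fhat x1 (X2 ω) ∂μ)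
    (fPD2 : ℝ → ℝ) (hPD2 : ∀ x2, fPD2 x2 = ∫ ω, fhat (X1 ω) x2 ∂μ)
    -- their mean-centered versions (centered at the random features)
    (fPD12c : ℝ → ℝ → ℝ)
    (hPD12c : ∀ x1 x2, fPD12c x1 x2
      = fPD12 x1 x2 - ∫ ω, fPD12 (X1 ω) (X2 ω) ∂μ)
    (fPD1c : ℝ → ℝ)
    (hPD1c : ∀ x1, fPD1c x1 = fPD1 x1 - ∫ ω, fPD1 (X1 ω) ∂μ)
    (fPD2c : ℝ → ℝ)
    (hPD2c : ∀ x2, fPD2c x2 = fPD2 x2 - ∫ ω, fPD2 (X2 ω) ∂μ) :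
    variance (fun ω => fPD12c (X1 ω) (X2 ω) - fPD1c (X1 ω) - fPD2c (X2 ω)) μ
      = b12 ^ 2 * variance (fun ω => X1 ω * X2 ω) μ ∧
    variance (fun ω => fPD12c (X1 ω) (X2 ω) - fPD1c (X1 ω) - fPD2c (X2 ω)) μ
      = b12 ^ 2 * (variance X1 μ * variance X2 μ - (cov μ X1 X2) ^ 2
          + cov μ (fun ω => X1 ω ^ 2) (fun ω => X2 ω ^ 2)) := by
  have hL2₁ : MemLp X1 2 μ := hm1.mono_exponent (by norm_num)
  have hL2₂ : MemLp X2 2 μ := hm2.mono_exponent (by norm_num)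
  have hL2₁₂ : MemLp (fun ω => X1 ω * X2 ω) 2 μ := hm2.mul' hm1
  have hi1 := hL2₁.integrable one_le_two
  have hi2 := hL2₂.integrable one_le_two
  have PD1 (x1 : ℝ) : fPD1 x1 = b1 * x1 := by
    rw [hPD1, ← integral_const_add_mul_of_integral_eq_zero hi2 h2 (b1 * x1) (b2 + b12 * x1)]
    congr 1 with ω
    rw [hfhat]; ring
  have PD2 (x2 : ℝ) : fPD2 x2 = b2 * x2 := by
    rw [hPD2, ← integral_const_add_mul_of_integral_eq_zero hi1 h1 (b2 * x2) (b1 + b12 * x2)]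
    congr 1 with ω
    rw [hfhat]; ring
  have mean12 : ∫ ω, fPD12 (X1 ω) (X2 ω) ∂μ = b12 * ∫ ω, X1 ω * X2 ω ∂μ := by
    simp_rw [hPD12, hfhat]
    exact integral_bilinear_of_integral_eq_zero hi1 hi2 (hL2₁₂.integrable one_le_two) h1 h2 _ _ _
  have interaction : (fun ω => fPD12c (X1 ω) (X2 ω) - fPD1c (X1 ω) - fPD2c (X2 ω))
      = fun ω => b12 * (X1 ω * X2 ω) - b12 * ∫ ω, X1 ω * X2 ω ∂μ := by
    funext ω
    rw [hPD12c, hPD1c, hPD2c, mean12]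
    simp only [PD1, PD2, integral_const_mul, h1, h2, hPD12, hfhat]
    ring
  have hvar : variance (fun ω => fPD12c (X1 ω) (X2 ω) - fPD1c (X1 ω) - fPD2c (X2 ω)) μ
      = b12 ^ 2 * variance (fun ω => X1 ω * X2 ω) μ := by
    rw [interaction, variance_sub_const (hL2₁₂.1.const_mul b12), variance_const_mul]
  exact ⟨hvar, hvar.trans
    (congrArg _ (variance_mul_eq_of_integral_eq_zero hL2₁ hL2₂ hL2₁₂ h1 h2))⟩
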